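/- Consider the reduced Bellman operator with transaction costs (𝓑f)(z,v) = min_{γ∈ℝ^J} max_{ξ^j∈{d_j,u_j}} [f(ξ∘z, γ) − ⟨γ, ξ∘z − ρz⟩ + g(γ−v, z)], where the transaction cost function g satisfies |g(γ₁,z) − g(γ₂,z)| ≤ β|z||γ₁−γ₂| for a fixed β > 0. Suppose f(z,v) is Lipschitz in v with |f(z,v₁) − f(z,v₂)| ≤ α|z||v₁−v₂| with α small enough that the minimax at every vertex configuration is evaluated via the nonlinear minimax theorem, so that (𝓑f)(z,v) = max_Ω 𝔼_Ω [f(ξ∘z, γ_Ω) + g(γ_Ω − v, z)] where each optimal γ_Ω does not depend on v. Then 𝓑f is again Lipschitz in v with the same type of bound: |(𝓑f)(z,v₁) − (𝓑f)(z,v₂)| ≤ β|z||v₁−v₂|. -/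
import Mathlib


noncomputable section

/-- Standard inner product on ℝ^J. -/
def dotp {J : ℕ} (u v : Fin J → ℝ) : ℝ := ∑ i, u i * v i

/-- Euclidean norm on ℝ^J. -/
def euclNorm {J : ℕ} (u : Fin J → ℝ) : ℝ := Real.sqrt (∑ i, (u i) ^ 2)

/-- The vertex of the parallelepiped of price jumps determined by the subset `I`:
coordinate `d_j` for `j ∈ I` and `u_j` for `j ∉ I`. -/
def vtx (J : ℕ) (dd uu : Fin J → ℝ) (I : Finset (Fin J)) : Fin J → ℝ :=
  fun j => if j ∈ I then dd j else uu j

/-- The reduced Bellman operator with transaction costs: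
`(𝓑f)(z,v) = min_γ max_{ξ^j ∈ {d_j,u_j}} [f(ξ∘z, γ) − ⟨γ, ξ∘z − ρz⟩ + g(γ−v, z)]`. -/
def BopTC (J : ℕ) (ρ : ℝ) (dd uu : Fin J → ℝ)
    (g : (Fin J → ℝ) → (Fin J → ℝ) → ℝ)
    (f : (Fin J → ℝ) → (Fin J → ℝ) → ℝ) (z v : Fin J → ℝ) : ℝ :=
  ⨅ γ : Fin J → ℝ, ⨆ I : Finset (Fin J),
    (f (fun j => vtx J dd uu I j * z j) γ -
      dotp γ (fun j => vtx J dd uu I j * z j - ρ * z j) + g (γ - v) z)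

lemma abs_ciSup_sub_ciSup_le {A : Type} [Fintype A] [Nonempty A]
    (h1 h2 : A → ℝ) (L : ℝ) (hbd : ∀ a, |h1 a - h2 a| ≤ L) :
    |(⨆ a, h1 a) - ⨆ a, h2 a| ≤ L := by
  have b1 : BddAbove (Set.range h1) := (Set.finite_range h1).bddAbove
  have b2 : BddAbove (Set.range h2) := (Set.finite_range h2).bddAbove
  rw [abs_le]
  constructor
  · rw [neg_le, neg_sub, sub_le_iff_le_add]
    refine ciSup_le fun a => ?_
    have := (abs_le.1 (hbd a)).1
    have : h2 a ≤ h1 a + L := by linarith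
    have hs := le_ciSup b1 a; linarith
  · rw [sub_le_iff_le_add]
    refine ciSup_le fun a => ?_
    have := (abs_le.1 (hbd a)).2
    have : h1 a ≤ h2 a + L := by linarith
    have hs := le_ciSup b2 a; linarith

theorem stmt19 (J : ℕ) (ρ : ℝ) (hρ : 1 ≤ ρ) (dd uu : Fin J → ℝ)
    (hdρ : ∀ j, dd j < ρ) (hρu : ∀ j, ρ < uu j)
    (β : ℝ) (hβ : 0 < β)
    (g : (Fin J → ℝ) → (Fin J → ℝ) → ℝ)
    -- the transaction-cost function g is Lipschitz in its first argument
    (hg : ∀ γ₁ γ₂ z, |g γ₁ z - g γ₂ z| ≤ β * euclNorm z * euclNorm (γ₁ - γ₂))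
    (f : (Fin J → ℝ) → (Fin J → ℝ) → ℝ)
    -- f is Lipschitz in v
    (α : ℝ) (hf : ∀ z v₁ v₂, |f z v₁ - f z v₂| ≤ α * euclNorm z * euclNorm (v₁ - v₂))
    -- the minimax representation from the nonlinear minimax theorem: for each z there are
    -- finitely many eligible subsets Ω of J+1 vertices, each carrying a risk-neutral
    -- probability p and an optimal portfolio γ_Ω independent of v, with
    -- (𝓑f)(z,v) = max_Ω 𝔼_Ω [f(ξ∘z, γ_Ω) + g(γ_Ω − v, z)]
    (A : Type) [Fintype A] [Nonempty A]
    (p : (Fin J → ℝ) → A → Finset (Fin J) → ℝ)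
    (γΩ : (Fin J → ℝ) → A → (Fin J → ℝ))
    (hp0 : ∀ z Ω I, 0 ≤ p z Ω I)
    (hp1 : ∀ z Ω, ∑ I : Finset (Fin J), p z Ω I = 1)
    (hprn : ∀ z Ω, ∑ I : Finset (Fin J), p z Ω I • (fun j => vtx J dd uu I j * z j) =
      ρ • z)
    (hrep : ∀ z v, BopTC J ρ dd uu g f z v =
      ⨆ Ω : A, ((∑ I : Finset (Fin J), p z Ω I * f (fun j => vtx J dd uu I j * z j) (γΩ z Ω)) +
        g (γΩ z Ω - v) z)) :
    -- then 𝓑f is Lipschitz in v with the same bound β|z|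
    ∀ z v₁ v₂, |BopTC J ρ dd uu g f z v₁ - BopTC J ρ dd uu g f z v₂| ≤
      β * euclNorm z * euclNorm (v₁ - v₂) := by
  intro z v₁ v₂
  rw [hrep z v₁, hrep z v₂]
  apply abs_ciSup_sub_ciSup_le
  intro Ω
  have key := hg (γΩ z Ω - v₁) (γΩ z Ω - v₂) z
  have hnorm : euclNorm ((γΩ z Ω - v₁) - (γΩ z Ω - v₂)) = euclNorm (v₁ - v₂) := by
    unfold euclNorm
    congr 1
    apply Finset.sum_congr rfl
    intro i _
    simp only [Pi.sub_apply]
    ring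
  rw [hnorm] at key
  calc |_| = |g (γΩ z Ω - v₁) z - g (γΩ z Ω - v₂) z| := by ring_nf
    _ ≤ _ := key
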